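/- Fix n ∈ ℕ with n ≥ 1 and real parameters a, b, α, β with (a−b+1|q)_n (β+1|q)_n (a+b+α+1|q)_n ≠ 0. Then for every real s: −[n]_q [2s+1]_q · u_n^{α,β}(x(s),a,b)_q = σ(−s−1) · u_{n−1}^{α+1,β+1}(x(s+1/2), a+1/2, b−1/2)_q − σ(s) · u_{n−1}^{α+1,β+1}(x(s−1/2), a+1/2, b−1/2)_q. -/
import Mathlib

open Finset

/-- The symmetric q-number `[s]_q = (q^{s/2} - q^{-s/2})/(q^{1/2} - q^{-1/2})`. -/
noncomputable def qnum (q s : ℝ) : ℝ :=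
  (q ^ (s / 2) - q ^ (-s / 2)) / (q ^ ((1 : ℝ) / 2) - q ^ (-(1 : ℝ) / 2))

/-- The symmetric q-factorial `[n]_q! = ∏_{m=1}^n [m]_q`. -/
noncomputable def qfact (q : ℝ) (n : ℕ) : ℝ :=
  ∏ m ∈ Finset.range n, qnum q ((m : ℝ) + 1)

/-- The symmetric q-Pochhammer symbol `(a|q)_k = ∏_{m=0}^{k-1} [a+m]_q`. -/
noncomputable def qpoch (q a : ℝ) (k : ℕ) : ℝ :=
  ∏ m ∈ Finset.range k, qnum q (a + (m : ℝ))

/-- The q-Racah polynomial `u_n^{α,β}(x(s),a,b)_q` on the lattice `x(s)=[s]_q[s+1]_q`. -/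
noncomputable def racahU (q a b α β : ℝ) (n : ℕ) (s : ℝ) : ℝ :=
  qpoch q (a - b + 1) n * qpoch q (β + 1) n * qpoch q (a + b + α + 1) n / qfact q n *
    ∑ k ∈ Finset.range (n + 1),
      qpoch q (-(n : ℝ)) k * qpoch q (α + β + (n : ℝ) + 1) k * qpoch q (a - s) k *
          qpoch q (a + s + 1) k /
        (qpoch q 1 k * qpoch q (a - b + 1) k * qpoch q (β + 1) k *
          qpoch q (a + b + α + 1) k)

/-- The alternative q-Racah polynomial `ũ_n^{α,β}(x(s),a,b)_q`. -/
noncomputable def racahUt (q a b α β : ℝ) (n : ℕ) (s : ℝ) : ℝ :=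
  qpoch q (a - b + 1) n * qpoch q (2 * a - β + 1) n * qpoch q (a - b - α + 1) n / qfact q n *
    ∑ k ∈ Finset.range (n + 1),
      qpoch q (-(n : ℝ)) k * qpoch q (2 * a - 2 * b - α - β + (n : ℝ) + 1) k *
          qpoch q (a - s) k * qpoch q (a + s + 1) k /
        (qpoch q 1 k * qpoch q (a - b + 1) k * qpoch q (2 * a - β + 1) k *
          qpoch q (a - b - α + 1) k)

/-- `σ(s) = [s-a]_q [s+b]_q [s+a-β]_q [b+α-s]_q`. -/
noncomputable def racahSigma (q a b α β s : ℝ) : ℝ :=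
  qnum q (s - a) * qnum q (s + b) * qnum q (s + a - β) * qnum q (b + α - s)

/-- `σ(-s-1) = [s+a+1]_q [b-s-1]_q [s-a+β+1]_q [b+α+s+1]_q`. -/
noncomputable def racahSigmaM (q a b α β s : ℝ) : ℝ :=
  qnum q (s + a + 1) * qnum q (b - s - 1) * qnum q (s - a + β + 1) * qnum q (b + α + s + 1)

/-- `σ̃(s) = [s-a]_q [s+b]_q [s-a+β]_q [b+α+s]_q`. -/
noncomputable def racahSigmaT (q a b α β s : ℝ) : ℝ :=
  qnum q (s - a) * qnum q (s + b) * qnum q (s - a + β) * qnum q (b + α + s)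

/-- `σ̃(-s-1) = [s+a+1]_q [b-s-1]_q [s+a-β+1]_q [b+α-s-1]_q`. -/
noncomputable def racahSigmaTM (q a b α β s : ℝ) : ℝ :=
  qnum q (s + a + 1) * qnum q (b - s - 1) * qnum q (s + a - β + 1) * qnum q (b + α - s - 1)

/-- `τ_n(s)` for the q-Racah polynomials. -/
noncomputable def racahTau (q a b α β : ℝ) (n : ℕ) (s : ℝ) : ℝ :=
  -qnum q (α + β + 2 * (n : ℝ) + 2) * qnum q (s + (n : ℝ) / 2) * qnum q (s + (n : ℝ) / 2 + 1) +
    qnum q (a + (n : ℝ) / 2 + 1) * qnum q (b - (n : ℝ) / 2 - 1) *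
      qnum q (β + (n : ℝ) / 2 + 1 - a) * qnum q (b + α + (n : ℝ) / 2 + 1) -
    qnum q (a + (n : ℝ) / 2) * qnum q (b - (n : ℝ) / 2) * qnum q (β + (n : ℝ) / 2 - a) *
      qnum q (b + α + (n : ℝ) / 2)

/-! ### Auxiliary machinery -/

section Aux

variable {q : ℝ}

lemma e_add (hq0 : 0 < q) (x y : ℝ) : q ^ ((x + y) / 2) = q ^ (x / 2) * q ^ (y / 2) := by
  rw [← Real.rpow_add hq0]; ring_nf

lemma e_neg (hq0 : 0 < q) (x : ℝ) : q ^ (-x / 2) = (q ^ (x / 2))⁻¹ := by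
  rw [neg_div, Real.rpow_neg hq0.le]

lemma e_pos (hq0 : 0 < q) (x : ℝ) : 0 < q ^ (x / 2) := Real.rpow_pos_of_pos hq0 _

lemma e_ne (hq0 : 0 < q) (x : ℝ) : q ^ (x / 2) ≠ 0 := (e_pos hq0 x).ne'

lemma e_one_ne_one (hq0 : 0 < q) (hq1 : q ≠ 1) : q ^ ((1:ℝ) / 2) ≠ 1 := by
  intro h
  apply hq1
  have h2 : q ^ ((1:ℝ)/2) * q ^ ((1:ℝ)/2) = q := by
    rw [← Real.rpow_add hq0]; norm_num
  rw [h, one_mul] at h2; exact h2.symm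

lemma den_ne (hq0 : 0 < q) (hq1 : q ≠ 1) :
    q ^ ((1:ℝ) / 2) - (q ^ ((1:ℝ) / 2))⁻¹ ≠ 0 := by
  have hp := e_pos hq0 1
  have h1 := e_one_ne_one hq0 hq1
  intro h
  apply h1
  have hne := hp.ne'
  have h2 : q ^ ((1:ℝ)/2) * q ^ ((1:ℝ)/2) = 1 := by
    have := sub_eq_zero.mp h
    field_simp [hne] at this
    nlinarith [this]
  nlinarith

lemma brak (hq0 : 0 < q) (x : ℝ) :
    qnum q x = (q ^ (x / 2) - (q ^ (x / 2))⁻¹) / (q ^ ((1:ℝ) / 2) - (q ^ ((1:ℝ) / 2))⁻¹) := by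
  rw [qnum, e_neg hq0, e_neg hq0]

lemma qnum_zero : qnum q 0 = 0 := by simp [qnum]

lemma qnum_neg (x : ℝ) : qnum q (-x) = -qnum q x := by
  rw [qnum, qnum, neg_neg]
  ring

lemma qnum_ne_zero (hq0 : 0 < q) (hq1 : q ≠ 1) {x : ℝ} (hx : x ≠ 0) : qnum q x ≠ 0 := by
  have hlog : Real.log q ≠ 0 := by
    simp only [ne_eq, Real.log_eq_zero, not_or]
    exact ⟨hq0.ne', hq1, by nlinarith⟩
  have hnum : q ^ (x / 2) - q ^ (-x / 2) ≠ 0 := by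
    rw [sub_ne_zero, Real.rpow_def_of_pos hq0, Real.rpow_def_of_pos hq0]
    intro h
    have h1 := Real.exp_injective h
    have h2 : Real.log q * (x / 2) = Real.log q * (-x / 2) := h1
    have h3 : x / 2 = -x / 2 := mul_left_cancel₀ hlog h2
    apply hx; linarith
  have hden : q ^ ((1:ℝ) / 2) - q ^ (-(1:ℝ) / 2) ≠ 0 := by
    rw [sub_ne_zero, Real.rpow_def_of_pos hq0, Real.rpow_def_of_pos hq0]
    intro h
    have h1 := Real.exp_injective h
    have h2 : Real.log q * ((1:ℝ) / 2) = Real.log q * (-(1:ℝ) / 2) := h1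
    have h3 : (1:ℝ) / 2 = -(1:ℝ) / 2 := mul_left_cancel₀ hlog h2
    norm_num at h3
  exact div_ne_zero hnum hden

lemma qpoch_zero (x : ℝ) : qpoch q x 0 = 1 := by simp [qpoch]

lemma qpoch_succ (x : ℝ) (k : ℕ) : qpoch q x (k + 1) = qpoch q x k * qnum q (x + k) := by
  rw [qpoch, qpoch, Finset.prod_range_succ]

lemma qpoch_succ' (x : ℝ) (k : ℕ) : qpoch q x (k + 1) = qnum q x * qpoch q (x + 1) k := by
  rw [qpoch, qpoch, Finset.prod_range_succ']
  rw [mul_comm]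
  congr 1
  · push_cast; ring_nf
  · apply Finset.prod_congr rfl
    intro i _
    congr 1
    push_cast; ring

lemma qpoch_factors_ne {x : ℝ} {n : ℕ} (h : qpoch q x n ≠ 0) :
    ∀ i ∈ Finset.range n, qnum q (x + i) ≠ 0 := by
  rw [qpoch, Finset.prod_ne_zero_iff] at h
  exact h

lemma qpoch_prefix_ne {x : ℝ} {n : ℕ} (h : qpoch q x n ≠ 0) {k : ℕ} (hk : k ≤ n) :
    qpoch q x k ≠ 0 := by
  have hf := qpoch_factors_ne h
  rw [qpoch, Finset.prod_ne_zero_iff]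
  intro i hi
  exact hf i (Finset.mem_range.mpr (lt_of_lt_of_le (Finset.mem_range.mp hi) hk))

lemma qpoch_shift_prefix_ne {x : ℝ} {n : ℕ} (h : qpoch q x n ≠ 0) {k : ℕ} (hk : k + 1 ≤ n) :
    qpoch q (x + 1) k ≠ 0 := by
  have hf := qpoch_factors_ne h
  rw [qpoch, Finset.prod_ne_zero_iff]
  intro i hi
  have harg : x + 1 + (i : ℝ) = x + ((i + 1 : ℕ) : ℝ) := by push_cast; ring
  rw [harg]
  apply hf (i + 1)
  apply Finset.mem_range.mpr
  have := Finset.mem_range.mp hi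
  omega

lemma qpoch_one_ne (hq0 : 0 < q) (hq1 : q ≠ 1) (k : ℕ) : qpoch q 1 k ≠ 0 := by
  rw [qpoch, Finset.prod_ne_zero_iff]
  intro i _
  apply qnum_ne_zero hq0 hq1
  positivity

lemma qfact_succ (m : ℕ) : qfact q (m + 1) = qfact q m * qnum q ((m : ℝ) + 1) := by
  rw [qfact, qfact, Finset.prod_range_succ]

lemma qfact_ne (hq0 : 0 < q) (hq1 : q ≠ 1) (m : ℕ) : qfact q m ≠ 0 := by
  rw [qfact, Finset.prod_ne_zero_iff]
  intro i _
  apply qnum_ne_zero hq0 hq1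
  positivity

lemma qpoch_neg_self (m : ℕ) : qpoch q (-(m : ℝ)) (m + 1) = 0 := by
  rw [qpoch]
  apply Finset.prod_eq_zero (Finset.self_mem_range_succ m)
  simp [qnum_zero]

set_option maxHeartbeats 2000000 in
lemma Dsplit (hq0 : 0 < q) (hq1 : q ≠ 1) (a b α β s k : ℝ) :
    qnum q (b - s - 1) * qnum q (s - a + β + 1) * qnum q (b + α + s + 1) * qnum q (a + s + 1 + k)
      + qnum q (s + b) * qnum q (s + a - β) * qnum q (b + α - s) * qnum q (a - s + k)
    = qnum q (2 * s + 1) *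
        (-(qnum q (a - b + 1 + k) * qnum q (β + 1 + k) * qnum q (a + b + α + 1 + k))
          + qnum q (α + β + k + 2) * (qnum q (a - s + k) * qnum q (a + s + 1 + k))) := by
  have h1 : b - s - 1 = b + (-s + -1) := by ring
  have h2 : s - a + β + 1 = s + (-a + (β + 1)) := by ring
  have h3 : b + α + s + 1 = b + (α + (s + 1)) := by ring
  have h4 : a + s + 1 + k = a + (s + (1 + k)) := by ring
  have h5 : s + a - β = s + (a + -β) := by ring
  have h6 : b + α - s = b + (α + -s) := by ring
  have h7 : a - s + k = a + (-s + k) := by ring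
  have h8 : 2 * s + 1 = s + (s + 1) := by ring
  have h9 : a - b + 1 + k = a + (-b + (1 + k)) := by ring
  have h10 : β + 1 + k = β + (1 + k) := by ring
  have h11 : a + b + α + 1 + k = a + (b + (α + (1 + k))) := by ring
  have h12 : α + β + k + 2 = α + (β + (k + (1 + 1))) := by ring
  rw [h1, h2, h3, h4, h5, h6, h7, h8, h9, h10, h11, h12]
  simp only [brak hq0, e_add hq0, e_neg hq0]
  have hD := den_ne hq0 hq1
  have ha := e_ne hq0 a
  have hb := e_ne hq0 b
  have hs := e_ne hq0 s
  have hk := e_ne hq0 k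
  have hal := e_ne hq0 α
  have hbe := e_ne hq0 β
  have h1' := e_ne hq0 1
  set A := q ^ (a / 2)
  set B := q ^ (b / 2)
  set S := q ^ (s / 2)
  set K := q ^ (k / 2)
  set L := q ^ (α / 2)
  set M := q ^ (β / 2)
  set E := q ^ ((1:ℝ) / 2)
  set DE := E - E⁻¹ with hDE
  field_simp
  ring

set_option maxHeartbeats 1000000 in
lemma star_id (hq0 : 0 < q) (hq1 : q ≠ 1) (m j α β : ℝ) :
    qnum q (m + 1) * qnum q (α + β + m + 2) =
      -(qnum q (-m + j) * qnum q (α + β + m + 3 + j)) + qnum q (1 + j) * qnum q (α + β + j + 2) := by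
  have h1 : α + β + m + 2 = α + (β + (m + (1 + 1))) := by ring
  have h3 : α + β + m + 3 + j = α + (β + (m + (1 + (1 + (1 + j))))) := by ring
  have h4 : α + β + j + 2 = α + (β + (j + (1 + 1))) := by ring
  rw [h1, h3, h4]
  simp only [brak hq0, e_add hq0, e_neg hq0]
  have hD := den_ne hq0 hq1
  have hm := e_ne hq0 m
  have hj := e_ne hq0 j
  have hal := e_ne hq0 α
  have hbe := e_ne hq0 β
  have h1' := e_ne hq0 1
  set Mv := q ^ (m / 2)
  set J := q ^ (j / 2)
  set L := q ^ (α / 2)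
  set Be := q ^ (β / 2)
  set E := q ^ ((1:ℝ) / 2)
  set DE := E - E⁻¹ with hDE
  field_simp
  ring

end Aux

/-- Auxiliary summand `F_k` in the proof of the difference relation. -/
noncomputable def racahF (q a b α β s : ℝ) (m : ℕ) (k : ℕ) : ℝ :=
  -(qpoch q (-(m : ℝ)) k * qpoch q (α + β + (m : ℝ) + 3) k *
      (qnum q (a - b + 1 + (k : ℝ)) * qnum q (β + 1 + (k : ℝ)) * qnum q (a + b + α + 1 + (k : ℝ))) *
      (qpoch q (a - s) k * qpoch q (a + s + 1) k) /
    (qpoch q 1 k * qpoch q (a - b + 2) k * qpoch q (β + 2) k * qpoch q (a + b + α + 2) k))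

/-- Auxiliary summand `H_k` in the proof of the difference relation. -/
noncomputable def racahH (q a b α β s : ℝ) (m : ℕ) : ℕ → ℝ
  | 0 => 0
  | (j + 1) =>
      qpoch q (-(m : ℝ)) j * qpoch q (α + β + (m : ℝ) + 3) j * qnum q (α + β + (j : ℝ) + 2) *
        (qpoch q (a - s) (j + 1) * qpoch q (a + s + 1) (j + 1)) /
      (qpoch q 1 j * qpoch q (a - b + 2) j * qpoch q (β + 2) j * qpoch q (a + b + α + 2) j)

theorem stmt_4 (q : ℝ) (hq0 : 0 < q) (hq1 : q ≠ 1) (n : ℕ) (hn : 1 ≤ n) (a b α β : ℝ)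
    (hnz : qpoch q (a - b + 1) n * qpoch q (β + 1) n * qpoch q (a + b + α + 1) n ≠ 0) :
    ∀ s : ℝ,
      -(qnum q (n : ℝ) * qnum q (2 * s + 1) * racahU q a b α β n s) =
        racahSigmaM q a b α β s *
            racahU q (a + 1 / 2) (b - 1 / 2) (α + 1) (β + 1) (n - 1) (s + 1 / 2) -
          racahSigma q a b α β s *
            racahU q (a + 1 / 2) (b - 1 / 2) (α + 1) (β + 1) (n - 1) (s - 1 / 2) := by
  obtain ⟨m, rfl⟩ : ∃ m, n = m + 1 := ⟨n - 1, by omega⟩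
  intro s
  simp only [Nat.add_sub_cancel]
  simp only [racahU, racahSigmaM, racahSigma]
  push_cast
  simp only [show a + 1 / 2 - (b - 1 / 2) + 1 = a - b + 2 from by ring,
    show β + 1 + 1 = β + 2 from by ring,
    show a + 1 / 2 + (b - 1 / 2) + (α + 1) + 1 = a + b + α + 2 from by ring,
    show α + 1 + (β + 1) + (m : ℝ) + 1 = α + β + (m : ℝ) + 3 from by ring,
    show a + 1 / 2 - (s + 1 / 2) = a - s from by ring,
    show a + 1 / 2 + (s + 1 / 2) + 1 = a + s + 2 from by ring,
    show a + 1 / 2 - (s - 1 / 2) = a - s + 1 from by ring,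
    show a + 1 / 2 + (s - 1 / 2) + 1 = a + s + 1 from by ring,
    show α + β + ((m : ℝ) + 1) + 1 = α + β + (m : ℝ) + 2 from by ring]
  trans (qpoch q (a - b + 2) m * qpoch q (β + 2) m * qpoch q (a + b + α + 2) m / qfact q m *
      (qnum q (2 * s + 1) *
        ∑ k ∈ Finset.range (m + 1 + 1), (racahF q a b α β s m k + racahH q a b α β s m k)))
  · -- LHS = M
    have hCn : qnum q ((m : ℝ) + 1) *
        (qpoch q (a - b + 1) (m + 1) * qpoch q (β + 1) (m + 1) * qpoch q (a + b + α + 1) (m + 1) /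
          qfact q (m + 1)) =
        qnum q (a - b + 1) * qnum q (β + 1) * qnum q (a + b + α + 1) *
          (qpoch q (a - b + 2) m * qpoch q (β + 2) m * qpoch q (a + b + α + 2) m / qfact q m) := by
      rw [qfact_succ, qpoch_succ' (a - b + 1) m, qpoch_succ' (β + 1) m, qpoch_succ' (a + b + α + 1) m,
        show a - b + 1 + 1 = a - b + 2 from by ring, show β + 1 + 1 = β + 2 from by ring,
        show a + b + α + 1 + 1 = a + b + α + 2 from by ring]
      have h1 : qfact q m ≠ 0 := qfact_ne hq0 hq1 m
      have h2 : qnum q ((m : ℝ) + 1) ≠ 0 := qnum_ne_zero hq0 hq1 (by positivity)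
      field_simp
    have hsum : ∀ k ∈ Finset.range (m + 1 + 1),
        qpoch q (a - b + 2) m * qpoch q (β + 2) m * qpoch q (a + b + α + 2) m / qfact q m *
          (racahF q a b α β s m k + racahH q a b α β s m k) =
        -(qnum q ((m : ℝ) + 1) *
          (qpoch q (a - b + 1) (m + 1) * qpoch q (β + 1) (m + 1) * qpoch q (a + b + α + 1) (m + 1) /
            qfact q (m + 1)) *
          (qpoch q (-((m : ℝ) + 1)) k * qpoch q (α + β + (m : ℝ) + 2) k * qpoch q (a - s) k *
            qpoch q (a + s + 1) k /
            (qpoch q 1 k * qpoch q (a - b + 1) k * qpoch q (β + 1) k * qpoch q (a + b + α + 1) k))) := by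
      intro k hk
      have hdag : -(qnum q (a - b + 1) * qnum q (β + 1) * qnum q (a + b + α + 1)) *
          (qpoch q (-((m : ℝ) + 1)) k * qpoch q (α + β + (m : ℝ) + 2) k * qpoch q (a - s) k *
            qpoch q (a + s + 1) k /
            (qpoch q 1 k * qpoch q (a - b + 1) k * qpoch q (β + 1) k * qpoch q (a + b + α + 1) k)) =
          racahF q a b α β s m k + racahH q a b α β s m k := by
        have h12 := mul_ne_zero_iff.mp hnz
        have hab : qpoch q (a - b + 1) (m + 1) ≠ 0 := (mul_ne_zero_iff.mp h12.1).1
        have hbe : qpoch q (β + 1) (m + 1) ≠ 0 := (mul_ne_zero_iff.mp h12.1).2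
        have hga : qpoch q (a + b + α + 1) (m + 1) ≠ 0 := h12.2
        have fab := qpoch_factors_ne hab
        have fbe := qpoch_factors_ne hbe
        have fga := qpoch_factors_ne hga
        rcases k with _ | j
        · simp only [racahF, racahH, qpoch_zero, Nat.cast_zero, add_zero]
          norm_num
        · have hjm : j ≤ m := by
            have := Finset.mem_range.mp hk
            omega
          have hd1 : qpoch q 1 j ≠ 0 := qpoch_one_ne hq0 hq1 j
          have hw : qnum q (1 + (j : ℝ)) ≠ 0 := qnum_ne_zero hq0 hq1 (by positivity)
          have hd2 : qpoch q (a - b + 2) j ≠ 0 := by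
            have h := qpoch_shift_prefix_ne hab (show j + 1 ≤ m + 1 by omega)
            rwa [show a - b + 1 + 1 = a - b + 2 from by ring] at h
          have hd3 : qpoch q (β + 2) j ≠ 0 := by
            have h := qpoch_shift_prefix_ne hbe (show j + 1 ≤ m + 1 by omega)
            rwa [show β + 1 + 1 = β + 2 from by ring] at h
          have hd4 : qpoch q (a + b + α + 2) j ≠ 0 := by
            have h := qpoch_shift_prefix_ne hga (show j + 1 ≤ m + 1 by omega)
            rwa [show a + b + α + 1 + 1 = a + b + α + 2 from by ring] at h
          have hNab : qnum q (a - b + 1) ≠ 0 := by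
            have h := fab 0 (Finset.mem_range.mpr (by omega))
            simpa using h
          have hNbe : qnum q (β + 1) ≠ 0 := by
            have h := fbe 0 (Finset.mem_range.mpr (by omega))
            simpa using h
          have hNga : qnum q (a + b + α + 1) ≠ 0 := by
            have h := fga 0 (Finset.mem_range.mpr (by omega))
            simpa using h
          have hNM : qnum q ((m : ℝ) + 1) ≠ 0 := qnum_ne_zero hq0 hq1 (by positivity)
          have x1 : qpoch q (-((m : ℝ) + 1)) (j + 1) = -qnum q ((m : ℝ) + 1) * qpoch q (-(m : ℝ)) j := by
            rw [qpoch_succ', show -((m : ℝ) + 1) + 1 = -(m : ℝ) from by ring, qnum_neg]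
          have x2 : qpoch q (α + β + (m : ℝ) + 2) (j + 1) =
              qnum q (α + β + (m : ℝ) + 2) * qpoch q (α + β + (m : ℝ) + 3) j := by
            rw [qpoch_succ', show α + β + (m : ℝ) + 2 + 1 = α + β + (m : ℝ) + 3 from by ring]
          have x4 : qpoch q 1 (j + 1) = qpoch q 1 j * qnum q (1 + (j : ℝ)) := qpoch_succ _ _
          have x5 : qpoch q (a - b + 1) (j + 1) = qnum q (a - b + 1) * qpoch q (a - b + 2) j := by
            rw [qpoch_succ', show a - b + 1 + 1 = a - b + 2 from by ring]
          have x6 : qpoch q (β + 1) (j + 1) = qnum q (β + 1) * qpoch q (β + 2) j := by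
            rw [qpoch_succ', show β + 1 + 1 = β + 2 from by ring]
          have x7 : qpoch q (a + b + α + 1) (j + 1) =
              qnum q (a + b + α + 1) * qpoch q (a + b + α + 2) j := by
            rw [qpoch_succ', show a + b + α + 1 + 1 = a + b + α + 2 from by ring]
          rw [x1, x2, x4, x5, x6, x7]
          by_cases hj : j = m
          · subst hj
            have hF0 : racahF q a b α β s j (j + 1) = 0 := by
              rw [racahF, qpoch_neg_self]
              simp
            rw [hF0, zero_add]
            simp only [racahH]
            have hcm : qnum q ((j : ℝ) + 1) = qnum q (1 + (j : ℝ)) := by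
              rw [show (j : ℝ) + 1 = 1 + (j : ℝ) from by ring]
            rw [hcm]
            field_simp
          · have hjm' : j + 1 ≤ m := by omega
            have hu : qnum q (a - b + 2 + (j : ℝ)) ≠ 0 := by
              have h := fab (j + 1) (Finset.mem_range.mpr (by omega))
              rwa [show a - b + 1 + ((j + 1 : ℕ) : ℝ) = a - b + 2 + (j : ℝ) from by push_cast; ring] at h
            have hv : qnum q (β + 2 + (j : ℝ)) ≠ 0 := by
              have h := fbe (j + 1) (Finset.mem_range.mpr (by omega))
              rwa [show β + 1 + ((j + 1 : ℕ) : ℝ) = β + 2 + (j : ℝ) from by push_cast; ring] at h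
            have hz : qnum q (a + b + α + 2 + (j : ℝ)) ≠ 0 := by
              have h := fga (j + 1) (Finset.mem_range.mpr (by omega))
              rwa [show a + b + α + 1 + ((j + 1 : ℕ) : ℝ) = a + b + α + 2 + (j : ℝ) from by push_cast; ring] at h
            simp only [racahF, racahH]
            have y1 : qpoch q (-(m : ℝ)) (j + 1) =
                qpoch q (-(m : ℝ)) j * qnum q (-(m : ℝ) + (j : ℝ)) := qpoch_succ _ _
            have y2 : qpoch q (α + β + (m : ℝ) + 3) (j + 1) =
                qpoch q (α + β + (m : ℝ) + 3) j * qnum q (α + β + (m : ℝ) + 3 + (j : ℝ)) :=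
              qpoch_succ _ _
            have y4 : qpoch q (a - b + 2) (j + 1) =
                qpoch q (a - b + 2) j * qnum q (a - b + 2 + (j : ℝ)) := qpoch_succ _ _
            have y5 : qpoch q (β + 2) (j + 1) =
                qpoch q (β + 2) j * qnum q (β + 2 + (j : ℝ)) := qpoch_succ _ _
            have y6 : qpoch q (a + b + α + 2) (j + 1) =
                qpoch q (a + b + α + 2) j * qnum q (a + b + α + 2 + (j : ℝ)) := qpoch_succ _ _
            rw [y1, y2, y4, y5, y6, x4]
            simp only [Nat.cast_add, Nat.cast_one]
            simp only [show a - b + 1 + ((j : ℝ) + 1) = a - b + 2 + (j : ℝ) from by ring,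
              show β + 1 + ((j : ℝ) + 1) = β + 2 + (j : ℝ) from by ring,
              show a + b + α + 1 + ((j : ℝ) + 1) = a + b + α + 2 + (j : ℝ) from by ring]
            have hstar := star_id hq0 hq1 (m : ℝ) (j : ℝ) α β
            have hDL : qpoch q 1 j * qnum q (1 + (j : ℝ)) *
                (qnum q (a - b + 1) * qpoch q (a - b + 2) j) *
                (qnum q (β + 1) * qpoch q (β + 2) j) *
                (qnum q (a + b + α + 1) * qpoch q (a + b + α + 2) j) ≠ 0 :=
              mul_ne_zero (mul_ne_zero (mul_ne_zero (mul_ne_zero hd1 hw)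
                (mul_ne_zero hNab hd2)) (mul_ne_zero hNbe hd3)) (mul_ne_zero hNga hd4)
            have hDF : qpoch q 1 j * qnum q (1 + (j : ℝ)) *
                (qpoch q (a - b + 2) j * qnum q (a - b + 2 + (j : ℝ))) *
                (qpoch q (β + 2) j * qnum q (β + 2 + (j : ℝ))) *
                (qpoch q (a + b + α + 2) j * qnum q (a + b + α + 2 + (j : ℝ))) ≠ 0 :=
              mul_ne_zero (mul_ne_zero (mul_ne_zero (mul_ne_zero hd1 hw)
                (mul_ne_zero hd2 hu)) (mul_ne_zero hd3 hv)) (mul_ne_zero hd4 hz)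
            have hD4 : qpoch q 1 j * qpoch q (a - b + 2) j * qpoch q (β + 2) j *
                qpoch q (a + b + α + 2) j ≠ 0 :=
              mul_ne_zero (mul_ne_zero (mul_ne_zero hd1 hd2) hd3) hd4
            have hDc : qpoch q 1 j * qpoch q (a - b + 2) j * qpoch q (β + 2) j *
                qpoch q (a + b + α + 2) j * qnum q (1 + (j : ℝ)) * qnum q (a - b + 2 + (j : ℝ)) *
                qnum q (β + 2 + (j : ℝ)) * qnum q (a + b + α + 2 + (j : ℝ)) ≠ 0 :=
              mul_ne_zero (mul_ne_zero (mul_ne_zero (mul_ne_zero hD4 hw) hu) hv) hz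
            have hL : -(qnum q (a - b + 1) * qnum q (β + 1) * qnum q (a + b + α + 1)) *
                (-qnum q ((m : ℝ) + 1) * qpoch q (-(m : ℝ)) j *
                    (qnum q (α + β + (m : ℝ) + 2) * qpoch q (α + β + (m : ℝ) + 3) j) *
                    qpoch q (a - s) (j + 1) * qpoch q (a + s + 1) (j + 1) /
                  (qpoch q 1 j * qnum q (1 + (j : ℝ)) *
                    (qnum q (a - b + 1) * qpoch q (a - b + 2) j) *
                    (qnum q (β + 1) * qpoch q (β + 2) j) *
                    (qnum q (a + b + α + 1) * qpoch q (a + b + α + 2) j))) =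
                qnum q ((m : ℝ) + 1) * qnum q (α + β + (m : ℝ) + 2) * qpoch q (-(m : ℝ)) j *
                  qpoch q (α + β + (m : ℝ) + 3) j * qpoch q (a - s) (j + 1) *
                  qpoch q (a + s + 1) (j + 1) * qnum q (a - b + 2 + (j : ℝ)) *
                  qnum q (β + 2 + (j : ℝ)) * qnum q (a + b + α + 2 + (j : ℝ)) /
                (qpoch q 1 j * qpoch q (a - b + 2) j * qpoch q (β + 2) j *
                  qpoch q (a + b + α + 2) j * qnum q (1 + (j : ℝ)) * qnum q (a - b + 2 + (j : ℝ)) *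
                  qnum q (β + 2 + (j : ℝ)) * qnum q (a + b + α + 2 + (j : ℝ))) := by
              rw [← mul_div_assoc, div_eq_div_iff hDL hDc]
              ring
            have hF : -(qpoch q (-(m : ℝ)) j * qnum q (-(m : ℝ) + (j : ℝ)) *
                  (qpoch q (α + β + (m : ℝ) + 3) j * qnum q (α + β + (m : ℝ) + 3 + (j : ℝ))) *
                  (qnum q (a - b + 2 + (j : ℝ)) * qnum q (β + 2 + (j : ℝ)) *
                    qnum q (a + b + α + 2 + (j : ℝ))) *
                  (qpoch q (a - s) (j + 1) * qpoch q (a + s + 1) (j + 1)) /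
                (qpoch q 1 j * qnum q (1 + (j : ℝ)) *
                  (qpoch q (a - b + 2) j * qnum q (a - b + 2 + (j : ℝ))) *
                  (qpoch q (β + 2) j * qnum q (β + 2 + (j : ℝ))) *
                  (qpoch q (a + b + α + 2) j * qnum q (a + b + α + 2 + (j : ℝ))))) =
                -(qpoch q (-(m : ℝ)) j * qnum q (-(m : ℝ) + (j : ℝ)) *
                  qpoch q (α + β + (m : ℝ) + 3) j * qnum q (α + β + (m : ℝ) + 3 + (j : ℝ)) *
                  qpoch q (a - s) (j + 1) * qpoch q (a + s + 1) (j + 1) *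
                  qnum q (a - b + 2 + (j : ℝ)) * qnum q (β + 2 + (j : ℝ)) *
                  qnum q (a + b + α + 2 + (j : ℝ))) /
                (qpoch q 1 j * qpoch q (a - b + 2) j * qpoch q (β + 2) j *
                  qpoch q (a + b + α + 2) j * qnum q (1 + (j : ℝ)) * qnum q (a - b + 2 + (j : ℝ)) *
                  qnum q (β + 2 + (j : ℝ)) * qnum q (a + b + α + 2 + (j : ℝ))) := by
              rw [neg_div, neg_inj, div_eq_div_iff hDF hDc]
              ring
            have hH : qpoch q (-(m : ℝ)) j * qpoch q (α + β + (m : ℝ) + 3) j *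
                  qnum q (α + β + (j : ℝ) + 2) *
                  (qpoch q (a - s) (j + 1) * qpoch q (a + s + 1) (j + 1)) /
                (qpoch q 1 j * qpoch q (a - b + 2) j * qpoch q (β + 2) j *
                  qpoch q (a + b + α + 2) j) =
                qpoch q (-(m : ℝ)) j * qpoch q (α + β + (m : ℝ) + 3) j *
                  qnum q (α + β + (j : ℝ) + 2) * qpoch q (a - s) (j + 1) *
                  qpoch q (a + s + 1) (j + 1) * qnum q (1 + (j : ℝ)) *
                  qnum q (a - b + 2 + (j : ℝ)) * qnum q (β + 2 + (j : ℝ)) *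
                  qnum q (a + b + α + 2 + (j : ℝ)) /
                (qpoch q 1 j * qpoch q (a - b + 2) j * qpoch q (β + 2) j *
                  qpoch q (a + b + α + 2) j * qnum q (1 + (j : ℝ)) * qnum q (a - b + 2 + (j : ℝ)) *
                  qnum q (β + 2 + (j : ℝ)) * qnum q (a + b + α + 2 + (j : ℝ))) := by
              rw [div_eq_div_iff hD4 hDc]
              ring
            rw [hL, hF, hH]
            linear_combination (qpoch q (-(m : ℝ)) j * qpoch q (α + β + (m : ℝ) + 3) j *
              qpoch q (a - s) (j + 1) * qpoch q (a + s + 1) (j + 1) * qnum q (a - b + 2 + (j : ℝ)) *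
              qnum q (β + 2 + (j : ℝ)) * qnum q (a + b + α + 2 + (j : ℝ)) /
              (qpoch q 1 j * qpoch q (a - b + 2) j * qpoch q (β + 2) j *
                qpoch q (a + b + α + 2) j * qnum q (1 + (j : ℝ)) * qnum q (a - b + 2 + (j : ℝ)) *
                qnum q (β + 2 + (j : ℝ)) * qnum q (a + b + α + 2 + (j : ℝ)))) * hstar
      linear_combination
        (-(qpoch q (a - b + 2) m * qpoch q (β + 2) m * qpoch q (a + b + α + 2) m / qfact q m)) * hdag +
        (qpoch q (-((m : ℝ) + 1)) k * qpoch q (α + β + (m : ℝ) + 2) k * qpoch q (a - s) k *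
          qpoch q (a + s + 1) k /
          (qpoch q 1 k * qpoch q (a - b + 1) k * qpoch q (β + 1) k * qpoch q (a + b + α + 1) k)) * hCn
    have hM1 : qpoch q (a - b + 2) m * qpoch q (β + 2) m * qpoch q (a + b + α + 2) m / qfact q m *
        (qnum q (2 * s + 1) *
          ∑ k ∈ Finset.range (m + 1 + 1), (racahF q a b α β s m k + racahH q a b α β s m k)) =
        qnum q (2 * s + 1) * ∑ k ∈ Finset.range (m + 1 + 1),
          qpoch q (a - b + 2) m * qpoch q (β + 2) m * qpoch q (a + b + α + 2) m / qfact q m *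
            (racahF q a b α β s m k + racahH q a b α β s m k) := by
      simp only [Finset.mul_sum]
      exact Finset.sum_congr rfl fun k _ => by ring
    rw [hM1, Finset.sum_congr rfl hsum, Finset.sum_neg_distrib, ← Finset.mul_sum]
    ring
  · -- M = RHS
    have hcomb : ∀ (X Y C : ℝ) (f g : ℕ → ℝ),
        X * (C * ∑ k ∈ Finset.range (m + 1), f k) - Y * (C * ∑ k ∈ Finset.range (m + 1), g k) =
        C * ∑ k ∈ Finset.range (m + 1), (X * f k - Y * g k) := by
      intro X Y C f g
      rw [Finset.sum_sub_distrib, ← Finset.mul_sum, ← Finset.mul_sum]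
      ring
    symm
    rw [hcomb]
    have hterm : ∀ k ∈ Finset.range (m + 1),
        qnum q (s + a + 1) * qnum q (b - s - 1) * qnum q (s - a + β + 1) * qnum q (b + α + s + 1) *
          (qpoch q (-(m : ℝ)) k * qpoch q (α + β + (m : ℝ) + 3) k * qpoch q (a - s) k *
            qpoch q (a + s + 2) k /
            (qpoch q 1 k * qpoch q (a - b + 2) k * qpoch q (β + 2) k * qpoch q (a + b + α + 2) k)) -
        qnum q (s - a) * qnum q (s + b) * qnum q (s + a - β) * qnum q (b + α - s) *
          (qpoch q (-(m : ℝ)) k * qpoch q (α + β + (m : ℝ) + 3) k * qpoch q (a - s + 1) k *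
            qpoch q (a + s + 1) k /
            (qpoch q 1 k * qpoch q (a - b + 2) k * qpoch q (β + 2) k * qpoch q (a + b + α + 2) k)) =
        qnum q (2 * s + 1) * (racahF q a b α β s m k + racahH q a b α β s m (k + 1)) := by
      intro k _
      have e1 : qpoch q (a + s + 1) (k + 1) = qnum q (a + s + 1) * qpoch q (a + s + 2) k := by
        rw [qpoch_succ', show a + s + 1 + 1 = a + s + 2 from by ring]
      have e2 : qpoch q (a + s + 1) (k + 1) = qpoch q (a + s + 1) k * qnum q (a + s + 1 + (k : ℝ)) :=
        qpoch_succ _ _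
      have e3 : qpoch q (a - s) (k + 1) = qnum q (a - s) * qpoch q (a - s + 1) k := qpoch_succ' _ _
      have e4 : qpoch q (a - s) (k + 1) = qpoch q (a - s) k * qnum q (a - s + (k : ℝ)) :=
        qpoch_succ _ _
      have hD := Dsplit hq0 hq1 a b α β s (k : ℝ)
      have e5 : qnum q (s + a + 1) = qnum q (a + s + 1) := by
        rw [show s + a + 1 = a + s + 1 from by ring]
      have e6 : qnum q (s - a) = -qnum q (a - s) := by
        rw [show s - a = -(a - s) from by ring, qnum_neg]
      rw [e5, e6]
      simp only [racahF, racahH]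
      linear_combination
        (-(qnum q (b - s - 1) * qnum q (s - a + β + 1) * qnum q (b + α + s + 1) *
            qpoch q (-(m : ℝ)) k * qpoch q (α + β + (m : ℝ) + 3) k * qpoch q (a - s) k /
            (qpoch q 1 k * qpoch q (a - b + 2) k * qpoch q (β + 2) k * qpoch q (a + b + α + 2) k))) * e1 +
        ((qnum q (b - s - 1) * qnum q (s - a + β + 1) * qnum q (b + α + s + 1) *
            qpoch q (-(m : ℝ)) k * qpoch q (α + β + (m : ℝ) + 3) k * qpoch q (a - s) k -
          qnum q (2 * s + 1) * qnum q (α + β + (k : ℝ) + 2) * qpoch q (-(m : ℝ)) k *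
            qpoch q (α + β + (m : ℝ) + 3) k * qpoch q (a - s) k * qnum q (a - s + (k : ℝ))) /
          (qpoch q 1 k * qpoch q (a - b + 2) k * qpoch q (β + 2) k * qpoch q (a + b + α + 2) k)) * e2 +
        (-(qnum q (s + b) * qnum q (s + a - β) * qnum q (b + α - s) *
            qpoch q (-(m : ℝ)) k * qpoch q (α + β + (m : ℝ) + 3) k * qpoch q (a + s + 1) k /
            (qpoch q 1 k * qpoch q (a - b + 2) k * qpoch q (β + 2) k * qpoch q (a + b + α + 2) k))) * e3 +
        ((qnum q (s + b) * qnum q (s + a - β) * qnum q (b + α - s) *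
            qpoch q (-(m : ℝ)) k * qpoch q (α + β + (m : ℝ) + 3) k * qpoch q (a + s + 1) k -
          qnum q (2 * s + 1) * qnum q (α + β + (k : ℝ) + 2) * qpoch q (-(m : ℝ)) k *
            qpoch q (α + β + (m : ℝ) + 3) k * qpoch q (a + s + 1) (k + 1)) /
          (qpoch q 1 k * qpoch q (a - b + 2) k * qpoch q (β + 2) k * qpoch q (a + b + α + 2) k)) * e4 +
        (qpoch q (-(m : ℝ)) k * qpoch q (α + β + (m : ℝ) + 3) k * qpoch q (a - s) k *
          qpoch q (a + s + 1) k /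
          (qpoch q 1 k * qpoch q (a - b + 2) k * qpoch q (β + 2) k * qpoch q (a + b + α + 2) k)) * hD

    rw [Finset.sum_congr rfl hterm, ← Finset.mul_sum]
    have hswap : ∑ k ∈ Finset.range (m + 1 + 1),
        (racahF q a b α β s m k + racahH q a b α β s m k) =
        ∑ k ∈ Finset.range (m + 1), (racahF q a b α β s m k + racahH q a b α β s m (k + 1)) := by
      rw [Finset.sum_add_distrib, Finset.sum_add_distrib,
        Finset.sum_range_succ (fun k => racahF q a b α β s m k) (m + 1),
        Finset.sum_range_succ' (fun k => racahH q a b α β s m k) (m + 1)]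
      have hF0 : racahF q a b α β s m (m + 1) = 0 := by
        rw [racahF, qpoch_neg_self]
        simp
      have hH0 : racahH q a b α β s m 0 = 0 := rfl
      rw [hF0, hH0, add_zero, add_zero]
    rw [hswap]
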